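/- Let φ be convex increasing on [0,∞) with φ(0)=0 but φ ∉ Φ_ex (i.e. sup_x φ(1+x)/(φ(1)+φ(x)) = ∞). Then there exists a Borel probability measure μ on ℝ, supported on [0,∞), such that ∫ φ(|x − 0|) dμ(x) < ∞ while ∫ φ(|x − (−1)|) dμ(x) = ∞; i.e., the φ-loss F^φ_μ is finite at 0 but infinite at −1. -/

import Mathlib

/-!
Choose `xₙ ≥ 0` with `φ (1 + xₙ) ≥ 2ⁿ⁺¹ (φ 1 + φ xₙ)` and put mass
`wₙ = φ 1 / (2ⁿ⁺¹ (φ 1 + φ xₙ))` at `xₙ`, the remaining mass at `0`. Then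
`wₙ φ xₙ ≤ 2⁻⁽ⁿ⁺¹⁾ φ 1` is summable, whereas `wₙ φ (1 + xₙ) ≥ φ 1` for every `n`.
-/

open Set Filter

/-- `Φ`: convex, strictly increasing bijections of `[0,∞)` (with `φ 0 = 0`). -/
def Phi (φ : ℝ → ℝ) : Prop :=
  ConvexOn ℝ (Ici 0) φ ∧ StrictMonoOn φ (Ici 0) ∧
    Set.BijOn φ (Ici 0) (Ici 0) ∧ φ 0 = 0

/-- `γ_φ = sup_{x ≥ 0} φ(1+x)/(φ(1)+φ(x))`, valued in `[0,∞]`. -/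
noncomputable def gam (φ : ℝ → ℝ) : ENNReal :=
  ⨆ x : Ici (0:ℝ), ENNReal.ofReal (φ (1 + x) / (φ 1 + φ x))

open MeasureTheory ENNReal

namespace MeasureTheory.Measure

variable {α : Type*} [MeasurableSpace α]

noncomputable def diracMixture (a : α) (w : ℕ → ℝ≥0∞) (x : ℕ → α) : Measure α :=
  (1 - ∑' n, w n) • dirac a + Measure.sum fun n => w n • dirac (x n)

variable {a : α} {w : ℕ → ℝ≥0∞} {x : ℕ → α}

theorem isProbabilityMeasure_diracMixture (hw : ∑' n, w n ≤ 1) :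
    IsProbabilityMeasure (diracMixture a w x) := by
  constructor
  simp [diracMixture, tsub_add_cancel_of_le hw]

theorem diracMixture_apply_eq_zero {s : Set α} (hs : MeasurableSet s) (ha : a ∉ s)
    (hx : ∀ n, x n ∉ s) : diracMixture a w x s = 0 := by
  simp [diracMixture, Measure.sum_apply _ hs, dirac_apply' _ hs, ha, hx]

theorem lintegral_diracMixture [MeasurableSingletonClass α] (f : α → ℝ≥0∞) :
    ∫⁻ y, f y ∂diracMixture a w x = (1 - ∑' n, w n) * f a + ∑' n, w n * f (x n) := by
  simp [diracMixture, lintegral_add_measure, lintegral_sum_measure]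

end MeasureTheory.Measure

namespace ENNReal

noncomputable def blowupWeight (c : ℝ≥0∞) (f : ℕ → ℝ≥0∞) (n : ℕ) : ℝ≥0∞ :=
  c / (2 ^ (n + 1) * (c + f n))

variable (c : ℝ≥0∞) (f : ℕ → ℝ≥0∞)

theorem tsum_inv_two_pow_succ : ∑' n : ℕ, (2 ^ (n + 1) : ℝ≥0∞)⁻¹ = 1 := by
  simp_rw [ENNReal.inv_pow, ENNReal.tsum_geometric_add_one, one_sub_inv_two, inv_inv]
  exact ENNReal.inv_mul_cancel two_ne_zero ofNat_ne_top

theorem blowupWeight_eq (n : ℕ) :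
    blowupWeight c f n = (2 ^ (n + 1))⁻¹ * (c / (c + f n)) := by
  rw [blowupWeight, div_eq_mul_inv, div_eq_mul_inv,
    ENNReal.mul_inv (by simp) (by simp), mul_left_comm]

theorem tsum_blowupWeight_le_one : ∑' n, blowupWeight c f n ≤ 1 := by
  calc ∑' n, blowupWeight c f n ≤ ∑' n : ℕ, (2 ^ (n + 1) : ℝ≥0∞)⁻¹ := by
        refine ENNReal.tsum_le_tsum fun n => ?_
        rw [blowupWeight_eq]
        exact mul_le_of_le_one_right' (div_le_of_le_mul (by simp))
    _ = 1 := tsum_inv_two_pow_succ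

theorem tsum_blowupWeight_mul_le : ∑' n, blowupWeight c f n * f n ≤ c := by
  calc ∑' n, blowupWeight c f n * f n ≤ ∑' n : ℕ, (2 ^ (n + 1) : ℝ≥0∞)⁻¹ * c := by
        refine ENNReal.tsum_le_tsum fun n => ?_
        rw [blowupWeight_eq, mul_assoc, div_eq_mul_inv, mul_assoc c, mul_comm _ (f n),
          ← div_eq_mul_inv]
        gcongr
        exact mul_le_of_le_one_right' (div_le_of_le_mul (by simp))
    _ = c := by rw [ENNReal.tsum_mul_right, tsum_inv_two_pow_succ, one_mul]

theorem tsum_blowupWeight_mul_eq_top {c : ℝ≥0∞} (hc₀ : c ≠ 0) (hc : c ≠ ⊤)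
    {f g : ℕ → ℝ≥0∞} (hf : ∀ n, f n ≠ ⊤) (hg : ∀ n, 2 ^ (n + 1) * (c + f n) ≤ g n) :
    ∑' n, blowupWeight c f n * g n = ⊤ := by
  refine eq_top_mono (ENNReal.tsum_le_tsum fun n => ?_) (tsum_const_eq_top_of_ne_zero hc₀)
  calc c = blowupWeight c f n * (2 ^ (n + 1) * (c + f n)) :=
        (ENNReal.div_mul_cancel (by simp [hc₀])
          (mul_ne_top (by simp) (add_ne_top.2 ⟨hc, hf n⟩))).symm
    _ ≤ blowupWeight c f n * g n := by gcongr; exact hg n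

end ENNReal

namespace Phi

variable {φ : ℝ → ℝ}

theorem nonneg (hφ : Phi φ) {y : ℝ} (hy : 0 ≤ y) : 0 ≤ φ y :=
  hφ.2.2.2 ▸ hφ.2.1.monotoneOn self_mem_Ici hy hy

theorem apply_one_pos (hφ : Phi φ) : 0 < φ 1 :=
  hφ.2.2.2 ▸ hφ.2.1 self_mem_Ici (mem_Ici.2 zero_le_one) one_pos

theorem exists_mul_le_of_gam_eq_top (hφ : Phi φ) (h : gam φ = ⊤) (C : ℝ≥0∞) (hC : C ≠ ⊤) :
    ∃ y, 0 ≤ y ∧ C * (.ofReal (φ 1) + .ofReal (φ y)) ≤ .ofReal (φ (1 + y)) := by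
  obtain ⟨⟨y, hy⟩, hlt⟩ := iSup_eq_top.mp h C (lt_top_iff_ne_top.2 hC)
  have hpos : 0 < φ 1 + φ y := add_pos_of_pos_of_nonneg hφ.apply_one_pos (hφ.nonneg hy)
  refine ⟨y, hy, ?_⟩
  rw [← ofReal_add hφ.apply_one_pos.le (hφ.nonneg hy),
    ← ENNReal.le_div_iff_mul_le (.inl (ofReal_pos.2 hpos).ne') (.inl ofReal_ne_top),
    ← ofReal_div_of_pos hpos]
  exact hlt.le

end Phi

/-- If `φ ∈ Φ` but `φ ∉ Φ_ex` (i.e. `γ_φ = ∞`), then there is a Borel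
probability measure `μ` on `ℝ`, supported on `[0,∞)`, whose φ-loss is finite
at `0` but infinite at `−1`. -/
theorem stmt_19 (φ : ℝ → ℝ) (hφ : Phi φ) (hnotex : gam φ = ⊤) :
    ∃ μ : MeasureTheory.Measure ℝ, MeasureTheory.IsProbabilityMeasure μ ∧
      μ (Set.Iio 0) = 0 ∧
      (∫⁻ x, ENNReal.ofReal (φ |(0:ℝ) - x|) ∂μ) < ⊤ ∧
      (∫⁻ x, ENNReal.ofReal (φ |(-1:ℝ) - x|) ∂μ) = ⊤ := by
  choose x hx₀ hx using fun n : ℕ =>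
    hφ.exists_mul_le_of_gam_eq_top hnotex (2 ^ (n + 1)) (by simp)
  set c := ENNReal.ofReal (φ 1)
  set f := fun n => ENNReal.ofReal (φ (x n))
  refine ⟨.diracMixture 0 (blowupWeight c f) x,
    Measure.isProbabilityMeasure_diracMixture (tsum_blowupWeight_le_one c f),
    Measure.diracMixture_apply_eq_zero measurableSet_Iio self_notMem_Iio
      (fun n => not_lt.2 (hx₀ n)), ?_, ?_⟩
  · have hdist (n : ℕ) : |0 - x n| = x n := by rw [zero_sub, abs_neg, abs_of_nonneg (hx₀ n)]
    simp only [Measure.lintegral_diracMixture, sub_self, abs_zero, hφ.2.2.2, ofReal_zero,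
      mul_zero, zero_add, hdist]
    exact (tsum_blowupWeight_mul_le c f).trans_lt ofReal_lt_top
  · have hdist (n : ℕ) : |-1 - x n| = 1 + x n := by
      rw [abs_of_nonpos (by linarith [hx₀ n])]; ring
    rw [Measure.lintegral_diracMixture]
    refine eq_top_mono (le_add_left le_rfl) ?_
    simp only [hdist]
    exact tsum_blowupWeight_mul_eq_top (ofReal_pos.2 hφ.apply_one_pos).ne' ofReal_ne_top
      (fun n => ofReal_ne_top) hx
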